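/- arXiv:2408.05236 — 3 statements merged into one kernel-verified Lean document; each statement's English description precedes it below -/
import Mathlib

section
/- Let ε = ±1 and let r : I → ℝ be twice differentiable and positive on an open interval I. If 2ε + 2r′(u)² + 3r(u)·r″(u) = 0 for all u ∈ I, then the function u ↦ r(u)^{4/3}·(ε + r′(u)²) is constant on I. -/
theorem stmt_11 (ε : ℝ) (hε : ε = 1 ∨ ε = -1) (a b : ℝ) (r : ℝ → ℝ)
    (hrpos : ∀ u ∈ Set.Ioo a b, 0 < r u)
    (hr : ∀ u ∈ Set.Ioo a b, DifferentiableAt ℝ r u)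
    (hr' : ∀ u ∈ Set.Ioo a b, DifferentiableAt ℝ (deriv r) u)
    (hode : ∀ u ∈ Set.Ioo a b,
      2 * ε + 2 * (deriv r u) ^ 2 + 3 * r u * deriv (deriv r) u = 0) :
    ∀ u ∈ Set.Ioo a b, ∀ u' ∈ Set.Ioo a b,
      r u ^ ((4 : ℝ) / 3) * (ε + (deriv r u) ^ 2)
        = r u' ^ ((4 : ℝ) / 3) * (ε + (deriv r u') ^ 2) := by
  set F : ℝ → ℝ := fun u => r u ^ ((4 : ℝ) / 3) * (ε + (deriv r u) ^ 2) with hF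
  have hFd : ∀ u ∈ Set.Ioo a b, HasDerivAt F 0 u := by
    intro u hu
    have h1 : HasDerivAt r (deriv r u) u := (hr u hu).hasDerivAt
    have h2 : HasDerivAt (deriv r) (deriv (deriv r) u) u := (hr' u hu).hasDerivAt
    have hru : (0 : ℝ) < r u := hrpos u hu
    have h3 : HasDerivAt (fun u => r u ^ ((4 : ℝ) / 3))
        (deriv r u * ((4 : ℝ) / 3) * r u ^ ((4 : ℝ) / 3 - 1)) u :=
      h1.rpow_const (Or.inl (ne_of_gt hru))
    have h4 : HasDerivAt (fun u => ε + (deriv r u) ^ 2)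
        (2 * deriv r u * deriv (deriv r) u) u := by
      have := (h2.pow 2).const_add ε
      simpa [mul_comm, mul_assoc, mul_left_comm] using this
    have h5 := h3.mul h4
    convert h5 using 1
    case e'_4 => rfl
    case e'_5 => rfl
    case e'_8 => rfl
    have key : r u ^ ((4 : ℝ) / 3) = r u ^ ((4 : ℝ) / 3 - 1) * r u := by
      rw [Real.rpow_sub hru, Real.rpow_one]
      field_simp
    rw [key]
    have hode' := hode u hu
    linear_combination (-(2 : ℝ) / 3) * r u ^ ((4 : ℝ) / 3 - 1) * deriv r u * hode'
  have hFc : ∀ u ∈ Set.Ioo a b, ContinuousAt F u := fun u hu =>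
    (hFd u hu).differentiableAt.continuousAt
  have key : ∀ u ∈ Set.Ioo a b, ∀ u' ∈ Set.Ioo a b, u < u' → F u = F u' := by
    intro u hu u' hu' hlt
    have hsub : Set.Icc u u' ⊆ Set.Ioo a b :=
      Set.Icc_subset_Ioo hu.1 hu'.2
    have hcont : ContinuousOn F (Set.Icc u u') := fun x hx =>
      (hFc x (hsub hx)).continuousWithinAt
    obtain ⟨c, hc, hc'⟩ := exists_hasDerivAt_eq_slope F (fun _ => 0) hlt hcont
      (fun x hx => hFd x (hsub (Set.Ioo_subset_Icc_self hx)))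
    have hne : u' - u ≠ 0 := sub_ne_zero.mpr (ne_of_gt hlt)
    have : (F u' - F u) / (u' - u) = 0 := hc'.symm
    have := (div_eq_zero_iff.mp this).resolve_right hne
    linarith
  intro u hu u' hu'
  rcases lt_trichotomy u u' with h | h | h
  · exact key u hu u' hu' h
  · rw [h]
  · exact (key u' hu' u hu h).symm
end

section
/- Let ε = ±1, η = ±1, and let r > 0, r′, r″, k₁, k₂, k₃, f₁, f₂, f₃, μ₁, μ₂, μ₃, ε₁, ε₂, ε₃ be real numbers with ε + r′² > 0. Set A = μ₁k₁f₁ + μ₂k₂f₂ + μ₃k₃f₃, D = r·(r″ + √(ε + r′²)·A) + ε + r′², and assume D ≠ 0. Define K = [r″(ε + r′² + rr″) + Σᵢⱼ εᵢεⱼkᵢkⱼ r(ε + r′²)fᵢfⱼ + Σᵢ μᵢkᵢ√(ε + r′²)(ε + r′² + 2rr″)fᵢ] / (η r² D²) and H = [(ε + r′² + rr″)(2ε + 2r′² + 3rr″) + 3Σᵢⱼ εᵢεⱼkᵢkⱼ r²(ε + r′²)fᵢfⱼ + Σᵢ μᵢkᵢ r√(ε + r′²)(5(ε + r′²) + 6rr″)fᵢ]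 / (3η r D²). If additionally μᵢ² = 1 = εᵢ² and μᵢμⱼ = εᵢεⱼ for all i, j ∈ {1,2,3}, then 3H − r²K − 2η/r = 0. -/
open Finset in
theorem stmt_12 (ε η r r' r'' : ℝ) (k f μ εv : Fin 3 → ℝ)
    (hε : ε = 1 ∨ ε = -1) (hη : η = 1 ∨ η = -1)
    (hr : 0 < r) (hpos : ε + r' ^ 2 > 0)
    (A D K H : ℝ)
    (hA : A = ∑ i, μ i * k i * f i)
    (hD : D = r * (r'' + Real.sqrt (ε + r' ^ 2) * A) + ε + r' ^ 2)
    (hDne : D ≠ 0)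
    (hK : K = (r'' * (ε + r' ^ 2 + r * r'')
        + (∑ i, ∑ j, εv i * εv j * k i * k j * r * (ε + r' ^ 2) * (f i * f j))
        + (∑ i, μ i * k i * Real.sqrt (ε + r' ^ 2) * (ε + r' ^ 2 + 2 * r * r'') * f i))
      / (η * r ^ 2 * D ^ 2))
    (hH : H = ((ε + r' ^ 2 + r * r'') * (2 * ε + 2 * r' ^ 2 + 3 * r * r'')
        + 3 * (∑ i, ∑ j, εv i * εv j * k i * k j * r ^ 2 * (ε + r' ^ 2) * (f i * f j))
        + (∑ i, μ i * k i * r * Real.sqrt (ε + r' ^ 2)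
            * (5 * (ε + r' ^ 2) + 6 * r * r'') * f i))
      / (3 * η * r * D ^ 2))
    (hμ : ∀ i, μ i ^ 2 = 1) (hεv : ∀ i, εv i ^ 2 = 1)
    (hμε : ∀ i j, μ i * μ j = εv i * εv j) :
    3 * H - r ^ 2 * K - 2 * η / r = 0 := by
  have key : ∀ c d : ℝ, (∑ i, ∑ j, εv i * εv j * k i * k j * c * d * (f i * f j)) = c * d * A ^ 2 := by
    intro c d
    rw [hA]
    simp only [Fin.sum_univ_three]
    linear_combination (-(k 0 * k 0 * c * d * (f 0 * f 0))) * hμε 0 0 + (-(k 0 * k 1 * c * d * (f 0 * f 1))) * hμε 0 1 + (-(k 0 * k 2 * c * d * (f 0 * f 2))) * hμε 0 2 + (-(k 1 * k 0 * c * d * (f 1 * f 0))) * hμε 1 0 + (-(k 1 * k 1 * c * d * (f 1 * f 1))) * hμε 1 1 + (-(k 1 * k 2 * c * d * (f 1 * f 2))) * hμε 1 2 + (-(k 2 * k 0 * c * d * (f 2 * f 0))) * hμε 2 0 + (-(k 2 * k 1 * c * d * (f 2 * f 1))) * hμε 2 1 + (-(k 2 * k 2 * c * d * (f 2 * f 2)))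 * hμε 2 2
  have e1 : (∑ i, μ i * k i * Real.sqrt (ε + r' ^ 2) * (ε + r' ^ 2 + 2 * r * r'') * f i)
      = Real.sqrt (ε + r' ^ 2) * (ε + r' ^ 2 + 2 * r * r'') * A := by
    rw [hA, Finset.mul_sum]
    exact Finset.sum_congr rfl fun i _ => by ring
  have e2 : (∑ i, μ i * k i * r * Real.sqrt (ε + r' ^ 2)
        * (5 * (ε + r' ^ 2) + 6 * r * r'') * f i)
      = r * Real.sqrt (ε + r' ^ 2) * (5 * (ε + r' ^ 2) + 6 * r * r'') * A := by
    rw [hA, Finset.mul_sum]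
    exact Finset.sum_congr rfl fun i _ => by ring
  rw [key, e1] at hK
  rw [key, e2] at hH
  have hs : Real.sqrt (ε + r' ^ 2) ^ 2 = ε + r' ^ 2 := Real.sq_sqrt hpos.le
  set s := Real.sqrt (ε + r' ^ 2) with hsdef
  clear hsdef
  clear_value s
  have hε2 : ε = s ^ 2 - r' ^ 2 := by linarith
  subst hε2
  subst hK hH hD
  rcases hη with h | h <;> subst h <;>
    field_simp <;> ring
end

section
/- Let ε = ±1 and let r be twice differentiable on an open interval I with r″(u)·(ε + r′(u)² + r(u)·r″(u)) = 0 for all u ∈ I, and suppose r″ is continuous and either r″ ≡ 0 on I or r″(u) ≠ 0 for all u ∈ I. Then either r(u) = c₁u + c₂ on I for some constants c₁, c₂, or (r²)″ ≡ −2ε on I, i.e., r(u)² = −ε(u + c₂)² + c for some constants c₂, c. -/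
open Set

lemma const_on_Ioo {a b : ℝ} {f : ℝ → ℝ}
    (hf : ∀ u ∈ Set.Ioo a b, DifferentiableAt ℝ f u)
    (h0 : ∀ u ∈ Set.Ioo a b, deriv f u = 0)
    {x y : ℝ} (hx : x ∈ Set.Ioo a b) (hy : y ∈ Set.Ioo a b) : f x = f y := by
  apply (convex_Ioo a b).is_const_of_fderivWithin_eq_zero
    (fun u hu => (hf u hu).differentiableWithinAt) _ hx hy
  intro u hu
  rw [fderivWithin_of_isOpen isOpen_Ioo hu]
  have : HasDerivAt f 0 u := h0 u hu ▸ (hf u hu).hasDerivAt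
  rw [this.hasFDerivAt.fderiv]
  ext v
  simp

lemma linear_on_Ioo {a b : ℝ} {f : ℝ → ℝ}
    (hf : ∀ u ∈ Set.Ioo a b, DifferentiableAt ℝ f u)
    (hf' : ∀ u ∈ Set.Ioo a b, DifferentiableAt ℝ (deriv f) u)
    (h0 : ∀ u ∈ Set.Ioo a b, deriv (deriv f) u = 0) :
    ∃ c₁ c₂ : ℝ, ∀ u ∈ Set.Ioo a b, f u = c₁ * u + c₂ := by
  rcases Set.eq_empty_or_nonempty (Set.Ioo a b) with he | ⟨u₀, hu₀⟩
  · exact ⟨0, 0, fun u hu => absurd (he ▸ hu) (Set.notMem_empty u)⟩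
  have hc : ∀ u ∈ Set.Ioo a b, deriv f u = deriv f u₀ :=
    fun u hu => const_on_Ioo hf' h0 hu hu₀
  set c₁ := deriv f u₀ with hc₁
  have hg : ∀ u ∈ Set.Ioo a b, DifferentiableAt ℝ (fun u => f u - c₁ * u) u :=
    fun u hu => (hf u hu).sub (differentiableAt_fun_id.const_mul c₁)
  have hg0 : ∀ u ∈ Set.Ioo a b, deriv (fun u => f u - c₁ * u) u = 0 := by
    intro u hu
    rw [deriv_fun_sub (hf u hu) (differentiableAt_fun_id.const_mul c₁)]
    have hd : deriv (fun y : ℝ => c₁ * y) u = c₁ := by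
      simpa using ((hasDerivAt_id u).const_mul c₁).deriv
    simp [hc u hu, hd]
  refine ⟨c₁, f u₀ - c₁ * u₀, fun u hu => ?_⟩
  have := const_on_Ioo hg hg0 hu hu₀
  linarith

theorem stmt_18 (ε : ℝ) (hε : ε = 1 ∨ ε = -1) (a b : ℝ) (r : ℝ → ℝ)
    (hr : ∀ u ∈ Set.Ioo a b, DifferentiableAt ℝ r u)
    (hr' : ∀ u ∈ Set.Ioo a b, DifferentiableAt ℝ (deriv r) u)
    (hcont : ContinuousOn (fun u => deriv (deriv r) u) (Set.Ioo a b))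
    (hode : ∀ u ∈ Set.Ioo a b,
      deriv (deriv r) u * (ε + (deriv r u) ^ 2 + r u * deriv (deriv r) u) = 0)
    (hdich : (∀ u ∈ Set.Ioo a b, deriv (deriv r) u = 0)
      ∨ (∀ u ∈ Set.Ioo a b, deriv (deriv r) u ≠ 0)) :
    (∃ c₁ c₂ : ℝ, ∀ u ∈ Set.Ioo a b, r u = c₁ * u + c₂)
      ∨ (∃ c₂ c : ℝ, ∀ u ∈ Set.Ioo a b, r u ^ 2 = -ε * (u + c₂) ^ 2 + c) := by
  have hε2 : ε * ε = 1 := by rcases hε with h | h <;> simp [h]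
  rcases hdich with h0 | hne
  · exact Or.inl (linear_on_Ioo hr hr' h0)
  · right
    -- h u = r u ^ 2 + ε * u ^ 2 is linear on Ioo
    set h : ℝ → ℝ := fun u => r u ^ 2 + ε * u ^ 2 with hh
    have hhd : ∀ u ∈ Set.Ioo a b, DifferentiableAt ℝ h u := by
      intro u hu
      exact ((hr u hu).pow 2).add ((differentiableAt_pow 2).const_mul ε)
    have hderiv : ∀ u ∈ Set.Ioo a b, deriv h u = 2 * r u * deriv r u + 2 * ε * u := by
      intro u hu
      rw [hh]
      rw [deriv_fun_add (f := fun y => r y ^ 2) ((hr u hu).pow 2) ((differentiableAt_pow 2).const_mul ε)]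
      rw [deriv_fun_pow (hr u hu) 2]
      have : deriv (fun u : ℝ => ε * u ^ 2) u = ε * (2 * u) := by
        rw [deriv_const_mul ε (differentiableAt_pow 2)]
        simp [deriv_pow_field]
      rw [this]; ring
    have hhd' : ∀ u ∈ Set.Ioo a b, DifferentiableAt ℝ (deriv h) u := by
      intro u hu
      have heq : deriv h =ᶠ[nhds u] fun v => 2 * r v * deriv r v + 2 * ε * v := by
        filter_upwards [isOpen_Ioo.mem_nhds hu] with v hv using hderiv v hv
      rw [Filter.EventuallyEq.differentiableAt_iff heq]
      exact ((((hr u hu).const_mul 2).mul (hr' u hu)).add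
        (differentiableAt_fun_id.const_mul (2*ε)))
    have hderiv2 : ∀ u ∈ Set.Ioo a b, deriv (deriv h) u = 0 := by
      intro u hu
      have heq : deriv h =ᶠ[nhds u] fun v => 2 * r v * deriv r v + 2 * ε * v := by
        filter_upwards [isOpen_Ioo.mem_nhds hu] with v hv using hderiv v hv
      rw [heq.deriv_eq]
      rw [deriv_fun_add (f := fun v => 2 * r v * deriv r v) (((hr u hu).const_mul 2).mul (hr' u hu))
        (differentiableAt_fun_id.const_mul (2*ε))]
      rw [deriv_fun_mul ((hr u hu).const_mul 2) (hr' u hu),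
        deriv_const_mul 2 (hr u hu)]
      have h2 : deriv (fun v : ℝ => 2 * ε * v) u = 2 * ε := by
        simpa using ((hasDerivAt_id u).const_mul (2*ε)).deriv
      rw [h2]
      have hode' := hode u hu
      have : ε + (deriv r u) ^ 2 + r u * deriv (deriv r) u = 0 :=
        (mul_eq_zero.mp hode').resolve_left (hne u hu)
      nlinarith [this]
    obtain ⟨c₁, c₂, hc⟩ := linear_on_Ioo hhd hhd' hderiv2
    refine ⟨-ε * c₁ / 2, c₂ + ε * (ε * c₁ / 2) ^ 2, fun u hu => ?_⟩
    have := hc u hu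
    simp only [hh] at this
    linear_combination this - c₁ * u * hε2
end
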